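/- arXiv:1801.04445 — 2 statements merged into one kernel-verified Lean document; each statement's English description precedes it below -/
import Mathlib

section
/- Let (X,d) be a compact metric space and f_n: X → X continuous for each n ≥ 0. If the non-autonomous system x_{n+1} = f_n(x_n) is Li–Yorke δ-chaotic for some δ > 0 (i.e., has an uncountable Li–Yorke δ-scrambled set), then there exist δ' > 0 and an increasing sequence Q ⊂ ℕ such that the system is distributionally δ'-chaotic in the sequence Q (i.e., has an uncountable distributionally δ'-scrambled set in Q). -/
open Filter Metric Set
open scoped Classical

/-- Trajectory of the non-autonomous system: `orb f n = f_{n-1} ∘ ⋯ ∘ f_0`, `orb f 0 = id`. -/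
def orb {X : Type*} (f : ℕ → X → X) : ℕ → X → X
  | 0 => id
  | n + 1 => fun x => f n (orb f n x)

/-- Cesàro average of the indicator of `dist (f_0^{p i} x) (f_0^{p i} y) < ε` over `i < n`. -/
noncomputable def distAvg {X : Type*} [MetricSpace X] (f : ℕ → X → X) (p : ℕ → ℕ)
    (x y : X) (ε : ℝ) (n : ℕ) : ℝ :=
  (∑ i ∈ Finset.range n, if dist (orb f (p i) x) (orb f (p i) y) < ε then (1 : ℝ) else 0) / n

section Helpers
variable {X : Type*} [MetricSpace X] [CompactSpace X]

lemma orb_cont {f : ℕ → X → X} (hf : ∀ n, Continuous (f n)) (n : ℕ) :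
    Continuous (orb f n) := by
  induction n with
  | zero => exact continuous_id
  | succ n ih => exact (hf n).comp ih

lemma exists_dist_bound (X : Type*) [MetricSpace X] [CompactSpace X] :
    ∃ C : ℝ, ∀ x y : X, dist x y ≤ C := by
  obtain ⟨C, hC⟩ := Metric.isBounded_iff.mp (isCompact_univ (X := X)).isBounded
  exact ⟨C, fun x y => hC (mem_univ x) (mem_univ y)⟩

lemma cond_exists {T : Set X} (hT : ¬ T.Countable) :
    ∃ x ∈ T, ∀ ε > 0, ¬ (T ∩ ball x ε).Countable := by
  by_contra h
  push_neg at h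
  obtain ⟨b, hbc, -, hbasis⟩ := TopologicalSpace.exists_countable_basis X
  set Bs : Set (Set X) := {U : Set X | U ∈ b ∧ (T ∩ U).Countable} with hBs
  have hBsc : Bs.Countable := hbc.mono (fun U hU => hU.1)
  have hsub : T ⊆ ⋃ U ∈ Bs, (T ∩ U) := by
    intro x hx
    obtain ⟨ε, hε, hcnt⟩ := h x hx
    obtain ⟨U, hU, hxU, hUsub⟩ := hbasis.exists_subset_of_mem_open (mem_ball_self hε) isOpen_ball
    exact mem_biUnion ⟨hU, hcnt.mono (inter_subset_inter_right _ hUsub)⟩ ⟨hx, hxU⟩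
  exact hT ((hBsc.biUnion (fun U hU => hU.2)).mono hsub)

lemma not_countable_funBool : ¬ Countable (ℕ → Bool) := by
  intro h
  obtain ⟨g, hg⟩ := exists_surjective_nat (ℕ → Bool)
  obtain ⟨n, hn⟩ := hg fun k => !(g k k)
  have := congrFun hn n
  simp at this

lemma exists_strictMono_times {P : ℕ → Prop} (h : ∀ N, ∃ n, N ≤ n ∧ P n) (N₀ : ℕ) :
    ∃ c : ℕ → ℕ, StrictMono c ∧ ∀ j, N₀ ≤ c j ∧ P (c j) := by
  choose g hg1 hg2 using h
  refine ⟨fun j => Nat.rec (g N₀) (fun _ prev => g (prev + 1)) j, ?_, ?_⟩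
  · apply strictMono_nat_of_lt_succ
    intro n
    exact lt_of_lt_of_le (Nat.lt_succ_self _) (hg1 _)
  · intro j
    induction j with
    | zero => exact ⟨hg1 _, hg2 _⟩
    | succ n ih =>
      exact ⟨le_trans ih.1 (le_of_lt (lt_of_lt_of_le (Nat.lt_succ_self _) (hg1 _))), hg2 _⟩

lemma orb_shrink {f : ℕ → X → X} (hf : ∀ n, Continuous (f n)) (u : X) {η : ℝ}
    (hη : 0 < η) (B : ℕ) :
    ∃ ρ > 0, ∀ x, dist x u ≤ ρ → ∀ t ≤ B, dist (orb f t x) (orb f t u) < η := by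
  induction B with
  | zero =>
    refine ⟨η / 2, by linarith, fun x hx t ht => ?_⟩
    interval_cases t
    calc dist (orb f 0 x) (orb f 0 u) = dist x u := rfl
    _ ≤ η / 2 := hx
    _ < η := by linarith
  | succ B ih =>
    obtain ⟨ρ₁, hρ₁, h₁⟩ := ih
    have hcont : ContinuousAt (orb f (B + 1)) u := (orb_cont hf (B + 1)).continuousAt
    obtain ⟨ρ₂, hρ₂, h₂⟩ := Metric.continuousAt_iff.mp hcont η hη
    refine ⟨min ρ₁ (ρ₂ / 2), by positivity, fun x hx t ht => ?_⟩
    rcases Nat.lt_succ_iff_lt_or_eq.mp (Nat.lt_succ_of_le ht) with h | h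
    · exact h₁ x (le_trans hx (min_le_left _ _)) t (Nat.lt_succ_iff.mp h)
    · subst h
      exact h₂ (lt_of_le_of_lt (le_trans hx (min_le_right _ _)) (by linarith))

end Helpers

section Core
variable {X : Type*} [MetricSpace X] [CompactSpace X]

/-- agreement of binary sequences up to `M` -/
def EqUpTo (M : ℕ) (α β : ℕ → Bool) : Prop := ∀ i, i < M → α i = β i

lemma EqUpTo.rfl {M α} : EqUpTo M α α := fun _ _ => Eq.refl _

lemma eqUpTo_congr {M : ℕ} {α β : ℕ → Bool} (h : EqUpTo M α β) (γ : ℕ → Bool) :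
    EqUpTo M α γ ↔ EqUpTo M β γ :=
  ⟨fun hh i hi => (h i hi).symm.trans (hh i hi), fun hh i hi => (h i hi).trans (hh i hi)⟩

lemma EqUpTo.mono {M M' : ℕ} {α β : ℕ → Bool} (h : EqUpTo M α β) (hM : M' ≤ M) :
    EqUpTo M' α β := fun i hi => h i (lt_of_lt_of_le hi hM)

noncomputable def indSum {X : Type*} [MetricSpace X] (f : ℕ → X → X) (q : ℕ → ℕ)
    (x y : X) (ε : ℝ) (n : ℕ) : ℝ :=
  ∑ i ∈ Finset.range n, if dist (orb f (q i) x) (orb f (q i) y) < ε then (1 : ℝ) else 0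

lemma distAvg_eq_indSum {X : Type*} [MetricSpace X] (f : ℕ → X → X) (q : ℕ → ℕ)
    (x y : X) (ε : ℝ) (n : ℕ) : distAvg f q x y ε n = indSum f q x y ε n / n := rfl

lemma indSum_nonneg {X : Type*} [MetricSpace X] (f : ℕ → X → X) (q : ℕ → ℕ)
    (x y : X) (ε : ℝ) (n : ℕ) : 0 ≤ indSum f q x y ε n :=
  Finset.sum_nonneg fun i _ => by split <;> norm_num

lemma indSum_le {X : Type*} [MetricSpace X] (f : ℕ → X → X) (q : ℕ → ℕ)
    (x y : X) (ε : ℝ) (n : ℕ) : indSum f q x y ε n ≤ n := by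
  calc indSum f q x y ε n ≤ ∑ i ∈ Finset.range n, (1 : ℝ) :=
        Finset.sum_le_sum fun i _ => by split <;> norm_num
  _ = n := by simp

lemma indSum_mono_eps {X : Type*} [MetricSpace X] {f : ℕ → X → X} {q : ℕ → ℕ}
    {x y : X} {ε ε' : ℝ} (h : ε ≤ ε') (n : ℕ) :
    indSum f q x y ε n ≤ indSum f q x y ε' n := by
  refine Finset.sum_le_sum fun i _ => ?_
  by_cases h1 : dist (orb f (q i) x) (orb f (q i) y) < ε
  · rw [if_pos h1, if_pos (lt_of_lt_of_le h1 h)]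
  · rw [if_neg h1]; split <;> norm_num

lemma indSum_congr {X : Type*} [MetricSpace X] {f : ℕ → X → X} {q q' : ℕ → ℕ}
    {x y : X} {ε : ℝ} {n : ℕ} (h : ∀ i, i < n → q' i = q i) :
    indSum f q' x y ε n = indSum f q x y ε n :=
  Finset.sum_congr rfl fun i hi => by rw [h i (Finset.mem_range.mp hi)]

lemma distAvg_nonneg {X : Type*} [MetricSpace X] (f : ℕ → X → X) (q : ℕ → ℕ)
    (x y : X) (ε : ℝ) (n : ℕ) : 0 ≤ distAvg f q x y ε n := by
  rw [distAvg_eq_indSum]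
  rcases Nat.eq_zero_or_pos n with h | h
  · simp [h, indSum]
  · exact div_nonneg (indSum_nonneg f q x y ε n) (by positivity)

lemma distAvg_le_one {X : Type*} [MetricSpace X] (f : ℕ → X → X) (q : ℕ → ℕ)
    (x y : X) (ε : ℝ) (n : ℕ) : distAvg f q x y ε n ≤ 1 := by
  rw [distAvg_eq_indSum]
  rcases Nat.eq_zero_or_pos n with h | h
  · simp [h]
  · rw [div_le_one (by exact_mod_cast h)]
    exact indSum_le f q x y ε n

/-- The state of the construction: a family of cells (closed balls) indexed by binary
sequences (depending only on the first `M` coordinates), each containing an uncountable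
piece of `S` in its interior ball, together with the finite part of the time sequence. -/
structure St (X : Type*) [MetricSpace X] (S : Set X) (M : ℕ) where
  ctr : (ℕ → Bool) → X
  rad : (ℕ → Bool) → ℝ
  big : (ℕ → Bool) → Set X
  qf : ℕ → ℕ
  qlen : ℕ
  qbd : ℕ
  ctr_inv : ∀ α β, EqUpTo M α β → ctr α = ctr β
  rad_inv : ∀ α β, EqUpTo M α β → rad α = rad β
  big_inv : ∀ α β, EqUpTo M α β → big α = big β
  rad_pos : ∀ α, 0 < rad α
  big_S : ∀ α, big α ⊆ S
  big_unc : ∀ α, ¬ (big α).Countable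
  big_ball : ∀ α, big α ⊆ ball (ctr α) (rad α)
  q_mono : ∀ i j, i < j → j < qlen → qf i < qf j
  q_bd : ∀ i, i < qlen → qf i < qbd

def St.cell {X : Type*} [MetricSpace X] {S : Set X} {M : ℕ} (A : St X S M)
    (α : ℕ → Bool) : Set X := closedBall (A.ctr α) (A.rad α)

lemma St.cell_congr {X : Type*} [MetricSpace X] {S : Set X} {M : ℕ} (A : St X S M)
    {α β : ℕ → Bool} (h : EqUpTo M α β) : A.cell α = A.cell β := by
  unfold St.cell
  rw [A.ctr_inv α β h, A.rad_inv α β h]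

lemma St.cell_nonempty {X : Type*} [MetricSpace X] {S : Set X} {M : ℕ} (A : St X S M)
    (α : ℕ → Bool) : (A.cell α).Nonempty :=
  ⟨A.ctr α, mem_closedBall_self (le_of_lt (A.rad_pos α))⟩

def Extends {X : Type*} [MetricSpace X] {S : Set X} {M M' : ℕ}
    (A : St X S M) (B : St X S M') : Prop :=
  A.qlen ≤ B.qlen ∧ (∀ i, i < A.qlen → B.qf i = A.qf i) ∧ ∀ α, B.cell α ⊆ A.cell α

lemma Extends.rfl {X : Type*} [MetricSpace X] {S : Set X} {M : ℕ} (A : St X S M) :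
    Extends A A := ⟨le_rfl, fun _ _ => Eq.refl _, fun _ => subset_rfl⟩

lemma Extends.trans {X : Type*} [MetricSpace X] {S : Set X} {M M' M'' : ℕ}
    {A : St X S M} {B : St X S M'} {C : St X S M''} (h1 : Extends A B) (h2 : Extends B C) :
    Extends A C :=
  ⟨le_trans h1.1 h2.1, fun i hi => (h2.2.1 i (lt_of_lt_of_le hi h1.1)).trans (h1.2.1 i hi),
    fun α => subset_trans (h2.2.2 α) (h1.2.2 α)⟩

/-- After processing, the pair of cells `σ τ` has a checkpoint `n` where the running
proportion of `1/M`-close times is at least `1 - 1/M`, for all points of the cells. -/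
def CloseProp {X : Type*} [MetricSpace X] {S : Set X} {M : ℕ} (f : ℕ → X → X)
    (A : St X S M) (σ τ : ℕ → Bool) : Prop :=
  ∃ n, M ≤ n ∧ n ≤ A.qlen ∧ ∀ x ∈ A.cell σ, ∀ y ∈ A.cell τ,
    (1 - 1 / (M : ℝ)) * n ≤ indSum f A.qf x y (1 / (M : ℝ)) n

/-- Similarly, a checkpoint where the proportion of `δ/2`-close times is at most `1/M`. -/
def FarProp {X : Type*} [MetricSpace X] {S : Set X} {M : ℕ} (f : ℕ → X → X) (δ : ℝ)
    (A : St X S M) (σ τ : ℕ → Bool) : Prop :=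
  ∃ n, M ≤ n ∧ n ≤ A.qlen ∧ ∀ x ∈ A.cell σ, ∀ y ∈ A.cell τ,
    indSum f A.qf x y (δ / 2) n ≤ n / (M : ℝ)

lemma CloseProp.persist {X : Type*} [MetricSpace X] {S : Set X} {M : ℕ} {f : ℕ → X → X}
    {A B : St X S M} {σ τ : ℕ → Bool} (h : CloseProp f A σ τ) (hE : Extends A B) :
    CloseProp f B σ τ := by
  obtain ⟨n, h1, h2, h3⟩ := h
  refine ⟨n, h1, le_trans h2 hE.1, fun x hx y hy => ?_⟩
  rw [indSum_congr (fun i hi => hE.2.1 i (lt_of_lt_of_le hi h2))]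
  exact h3 x (hE.2.2 σ hx) y (hE.2.2 τ hy)

lemma FarProp.persist {X : Type*} [MetricSpace X] {S : Set X} {M : ℕ} {f : ℕ → X → X}
    {δ : ℝ} {A B : St X S M} {σ τ : ℕ → Bool} (h : FarProp f δ A σ τ) (hE : Extends A B) :
    FarProp f δ B σ τ := by
  obtain ⟨n, h1, h2, h3⟩ := h
  refine ⟨n, h1, le_trans h2 hE.1, fun x hx y hy => ?_⟩
  rw [indSum_congr (fun i hi => hE.2.1 i (lt_of_lt_of_le hi h2))]
  exact h3 x (hE.2.2 σ hx) y (hE.2.2 τ hy)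

lemma strictMono_of_step {F : ℕ → ℕ} {L : ℕ} (h : ∀ k, k + 1 < L → F k < F (k + 1)) :
    ∀ i j, i < j → j < L → F i < F j := by
  intro i j hij hj
  induction j with
  | zero => omega
  | succ j ih =>
    rcases Nat.lt_succ_iff_lt_or_eq.mp hij with h' | h'
    · exact lt_trans (ih h' (by omega)) (h j hj)
    · subst h'; exact h _ hj

end Core

section Core2
lemma EqUpTo.symm {M : ℕ} {α β : ℕ → Bool} (h : EqUpTo M α β) : EqUpTo M β α :=
  fun i hi => (h i hi).symm

lemma ite2_inv {γ : Sort*} {M : ℕ} {σ τ : ℕ → Bool} (F : (ℕ → Bool) → γ)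
    (hF : ∀ α β, EqUpTo M α β → F α = F β) (a b : γ) (α β : ℕ → Bool) (h : EqUpTo M α β) :
    (if EqUpTo M α σ then a else if EqUpTo M α τ then b else F α)
      = (if EqUpTo M β σ then a else if EqUpTo M β τ then b else F β) := by
  by_cases h1 : EqUpTo M β σ
  · rw [if_pos ((eqUpTo_congr h σ).mpr h1), if_pos h1]
  · rw [if_neg (fun hh => h1 ((eqUpTo_congr h σ).mp hh)), if_neg h1]
    by_cases h2 : EqUpTo M β τ
    · rw [if_pos ((eqUpTo_congr h τ).mpr h2), if_pos h2]
    · rw [if_neg (fun hh => h2 ((eqUpTo_congr h τ).mp hh)), if_neg h2, hF α β h]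
end Core2

section Atomic
variable {X : Type*} [MetricSpace X] [CompactSpace X]
variable {f : ℕ → X → X} {S : Set X} {δ : ℝ}

lemma freq_close {u v : X}
    (hli : liminf (fun n => dist (orb f n u) (orb f n v)) atTop = 0)
    {η : ℝ} (hη : 0 < η) :
    ∀ N, ∃ n, N ≤ n ∧ dist (orb f n u) (orb f n v) < η := by
  intro N
  by_contra hcon
  push_neg at hcon
  obtain ⟨C, hCb⟩ := exists_dist_bound X
  have hb : IsBoundedUnder (· ≤ ·) atTop (fun n => dist (orb f n u) (orb f n v)) :=
    isBoundedUnder_of ⟨C, fun n => hCb _ _⟩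
  have : η ≤ liminf (fun n => dist (orb f n u) (orb f n v)) atTop :=
    le_liminf_of_le hb.isCoboundedUnder_ge
      (eventually_atTop.mpr ⟨N, fun n hn => hcon n hn⟩)
  rw [hli] at this
  linarith

lemma freq_far {u v : X}
    (hls : δ < limsup (fun n => dist (orb f n u) (orb f n v)) atTop) :
    ∀ N, ∃ n, N ≤ n ∧ δ < dist (orb f n u) (orb f n v) := by
  intro N
  by_contra hcon
  push_neg at hcon
  have hb : IsBoundedUnder (· ≥ ·) atTop (fun n => dist (orb f n u) (orb f n v)) :=
    isBoundedUnder_of ⟨0, fun n => dist_nonneg⟩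
  have : limsup (fun n => dist (orb f n u) (orb f n v)) atTop ≤ δ :=
    limsup_le_of_le hb.isCoboundedUnder_le
      (eventually_atTop.mpr ⟨N, fun n hn => hcon n hn⟩)
  linarith

end Atomic

section Atomic2
set_option maxHeartbeats 1000000
variable {X : Type*} [MetricSpace X] [CompactSpace X]
variable {f : ℕ → X → X} {S : Set X} {δ : ℝ}

lemma atomic (hf : ∀ n, Continuous (f n)) (hδ : 0 < δ)
    (hLY : ∀ x ∈ S, ∀ y ∈ S, x ≠ y →
      liminf (fun n => dist (orb f n x) (orb f n y)) atTop = 0 ∧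
      δ < limsup (fun n => dist (orb f n x) (orb f n y)) atTop)
    {M : ℕ} (hM : 0 < M) (A : St X S M) (σ τ : ℕ → Bool) (hστ : ¬ EqUpTo M σ τ) :
    ∃ B : St X S M, Extends A B ∧ A.qlen + 1 ≤ B.qlen ∧
      CloseProp f B σ τ ∧ FarProp f δ B σ τ := by
  classical
  obtain ⟨u, huT, hu⟩ := cond_exists (A.big_unc σ)
  have hvunc : ¬ (A.big τ \ {u}).Countable := by
    intro h
    refine A.big_unc τ ((h.insert u).mono ?_)
    intro z hz
    by_cases hzu : z = u
    · exact mem_insert_iff.mpr (Or.inl hzu)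
    · exact mem_insert_of_mem _ ⟨hz, hzu⟩
  obtain ⟨v, hvT, hv0⟩ := cond_exists hvunc
  have hv : ∀ ε > 0, ¬ (A.big τ ∩ ball v ε).Countable := fun ε hε h =>
    hv0 ε hε (h.mono (inter_subset_inter_left _ diff_subset))
  have hvτ : v ∈ A.big τ := hvT.1
  have hvu : v ≠ u := hvT.2
  have huS : u ∈ S := A.big_S σ huT
  have hvS : v ∈ S := A.big_S τ hvτ
  have huv : u ≠ v := Ne.symm hvu
  obtain ⟨hli, hls⟩ := hLY u huS v hvS huv
  set N := A.qlen with hN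
  set L1 := M * (N + 1) with hL1
  set L2 := M * (N + L1 + 1) with hL2
  have hM0 : (0 : ℝ) < M := by exact_mod_cast hM
  have h2M : (0 : ℝ) < 1 / (2 * (M : ℝ)) := by positivity
  obtain ⟨c, hcmono, hc⟩ := exists_strictMono_times (freq_close hli h2M) A.qbd
  obtain ⟨d, hdmono, hd⟩ := exists_strictMono_times (freq_far hls) (c L1 + 1)
  set T := d L2 with hT
  set η := min (1 / (4 * (M : ℝ))) (δ / 4) with hηdef
  have hηpos : 0 < η := lt_min (by positivity) (by linarith)
  obtain ⟨ρu, hρu, hρu'⟩ := orb_shrink hf u hηpos T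
  obtain ⟨ρv, hρv, hρv'⟩ := orb_shrink hf v hηpos T
  have huball : dist u (A.ctr σ) < A.rad σ := by
    have := A.big_ball σ huT; rwa [mem_ball] at this
  have hvball : dist v (A.ctr τ) < A.rad τ := by
    have := A.big_ball τ hvτ; rwa [mem_ball] at this
  set ρσ := min ρu (A.rad σ - dist u (A.ctr σ)) with hρσdef
  set ρτ := min ρv (A.rad τ - dist v (A.ctr τ)) with hρτdef
  have hρσpos : 0 < ρσ := lt_min hρu (by linarith)
  have hρτpos : 0 < ρτ := lt_min hρv (by linarith)
  have hL1pos : 0 < L1 := Nat.mul_pos hM (Nat.succ_pos N)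
  have hL2pos : 0 < L2 := Nat.mul_pos hM (Nat.succ_pos _)
  have hML1 : M ≤ L1 := Nat.le_mul_of_pos_right M (Nat.succ_pos N)
  have hcd : ∀ k1 k2, k1 ≤ L1 → c k1 < d k2 := fun k1 k2 h =>
    lt_of_le_of_lt (hcmono.monotone h) (lt_of_lt_of_le (Nat.lt_succ_self _) (hd k2).1)
  have hAc : ∀ i k, i < N → A.qf i < c k := fun i k hi =>
    lt_of_lt_of_le (A.q_bd i hi) (hc k).1
  have hcT : ∀ k, k ≤ L1 → c k < T := fun k hk =>
    lt_of_lt_of_le (hcd k 0 hk) (hdmono.monotone (Nat.zero_le L2))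
  have hdT : ∀ k, k ≤ L2 → d k ≤ T := fun k hk => hdmono.monotone hk
  set ctrB : (ℕ → Bool) → X :=
    (fun α => if EqUpTo M α σ then u else if EqUpTo M α τ then v else A.ctr α) with hctrB
  set radB : (ℕ → Bool) → ℝ :=
    (fun α => if EqUpTo M α σ then ρσ else if EqUpTo M α τ then ρτ else A.rad α) with hradB
  set bigB : (ℕ → Bool) → Set X :=
    (fun α => if EqUpTo M α σ then A.big σ ∩ ball u ρσ else
      if EqUpTo M α τ then A.big τ ∩ ball v ρτ else A.big α) with hbigB
  set qB : ℕ → ℕ :=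
    (fun i => if i < N then A.qf i else if i < N + L1 then c (i - N) else
      if i < N + L1 + L2 then d (i - (N + L1)) else T + i + 1) with hqB
  have hq1 : ∀ i, i < N → qB i = A.qf i := by
    intro i h; simp only [hqB]; rw [if_pos h]
  have hq2 : ∀ i, N ≤ i → i < N + L1 → qB i = c (i - N) := by
    intro i h1 h2; simp only [hqB]; rw [if_neg (by omega), if_pos h2]
  have hq3 : ∀ i, N + L1 ≤ i → i < N + L1 + L2 → qB i = d (i - (N + L1)) := by
    intro i h1 h2; simp only [hqB]; rw [if_neg (by omega), if_neg (by omega), if_pos h2]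
  have hEσσ : EqUpTo M σ σ := EqUpTo.rfl
  have hEττ : EqUpTo M τ τ := EqUpTo.rfl
  have hτσ : ¬ EqUpTo M τ σ := fun h => hστ h.symm
  have hctrσ : ctrB σ = u := by simp only [hctrB]; rw [if_pos hEσσ]
  have hctrτ : ctrB τ = v := by simp only [hctrB]; rw [if_neg hτσ, if_pos hEττ]
  have hradσ : radB σ = ρσ := by simp only [hradB]; rw [if_pos hEσσ]
  have hradτ : radB τ = ρτ := by simp only [hradB]; rw [if_neg hτσ, if_pos hEττ]
  obtain ⟨B, hBctr, hBrad, hBbig, hBqf, hBqlen⟩ :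
      ∃ B : St X S M, B.ctr = ctrB ∧ B.rad = radB ∧ B.big = bigB ∧ B.qf = qB ∧
        B.qlen = N + L1 + L2 := by
    refine ⟨{
    ctr := ctrB
    rad := radB
    big := bigB
    qf := qB
    qlen := N + L1 + L2
    qbd := T + 1
    ctr_inv := by
      simp only [hctrB]
      exact fun α β h => ite2_inv A.ctr A.ctr_inv u v α β h
    rad_inv := by
      simp only [hradB]
      exact fun α β h => ite2_inv A.rad A.rad_inv ρσ ρτ α β h
    big_inv := by
      simp only [hbigB]
      exact fun α β h => ite2_inv A.big A.big_inv _ _ α β h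
    rad_pos := by
      intro α
      simp only [hradB, hbigB, hqB]
      split_ifs
      · exact hρσpos
      · exact hρτpos
      · exact A.rad_pos α
    big_S := by
      intro α
      simp only [hradB, hbigB, hqB]
      split_ifs
      · exact (inter_subset_left).trans (A.big_S σ)
      · exact (inter_subset_left).trans (A.big_S τ)
      · exact A.big_S α
    big_unc := by
      intro α
      simp only [hradB, hbigB, hqB]
      split_ifs
      · exact hu ρσ hρσpos
      · exact hv ρτ hρτpos
      · exact A.big_unc α
    big_ball := by
      intro α
      simp only [hctrB, hradB, hbigB]
      split_ifs
      · exact inter_subset_right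
      · exact inter_subset_right
      · exact A.big_ball α
    q_mono := by
      simp only [hradB, hbigB, hqB]
      refine strictMono_of_step ?_
      intro k hk
      by_cases h1 : k < N
      · by_cases h2 : k + 1 < N
        · rw [if_pos h1, if_pos h2]; exact A.q_mono k (k + 1) (Nat.lt_succ_self k) h2
        · have h3 : k + 1 < N + L1 := by omega
          rw [if_pos h1, if_neg h2, if_pos h3]
          exact hAc k _ h1
      · by_cases h2 : k < N + L1
        · by_cases h3 : k + 1 < N + L1
          · rw [if_neg h1, if_pos h2, if_neg (by omega : ¬ k + 1 < N), if_pos h3]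
            exact hcmono (by omega)
          · have h4 : k + 1 < N + L1 + L2 := hk
            rw [if_neg h1, if_pos h2, if_neg (by omega : ¬ k + 1 < N), if_neg h3, if_pos h4]
            exact hcd (k - N) _ (by omega)
        · have h3 : k < N + L1 + L2 := by omega
          rw [if_neg h1, if_neg h2, if_pos h3, if_neg (by omega : ¬ k + 1 < N),
            if_neg (by omega : ¬ k + 1 < N + L1), if_pos hk]
          exact hdmono (by omega)
    q_bd := by
      simp only [hradB, hbigB, hqB]
      intro i hi
      by_cases h1 : i < N
      · rw [if_pos h1]
        have : A.qf i < T := lt_trans (hAc i 0 h1) (hcT 0 (Nat.zero_le L1))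
        omega
      · by_cases h2 : i < N + L1
        · rw [if_neg h1, if_pos h2]
          have : c (i - N) < T := hcT (i - N) (by omega)
          omega
        · rw [if_neg h1, if_neg h2, if_pos hi]
          have : d (i - (N + L1)) ≤ T := hdT _ (by omega)
          omega
  }, rfl, rfl, rfl, rfl, rfl⟩
  have hcellσ : B.cell σ = closedBall u ρσ := by
    unfold St.cell; rw [hBctr, hBrad, hctrσ, hradσ]
  have hcellτ : B.cell τ = closedBall v ρτ := by
    unfold St.cell; rw [hBctr, hBrad, hctrτ, hradτ]
  have hExt : Extends A B := by
    refine ⟨by rw [hBqlen]; omega, ?_, ?_⟩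
    · intro i hi
      rw [hBqf]
      exact hq1 i hi
    · intro α
      by_cases h1 : EqUpTo M α σ
      · have hcB : B.cell α = closedBall u ρσ := by
          unfold St.cell
          rw [hBctr, hBrad]
          simp only [hctrB, hradB]
          rw [if_pos h1, if_pos h1]
        rw [hcB, A.cell_congr h1]
        unfold St.cell
        intro x hx
        rw [mem_closedBall] at hx ⊢
        have h2 : ρσ ≤ A.rad σ - dist u (A.ctr σ) := min_le_right _ _
        calc dist x (A.ctr σ) ≤ dist x u + dist u (A.ctr σ) := dist_triangle _ _ _
        _ ≤ A.rad σ := by linarith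
      · by_cases h2 : EqUpTo M α τ
        · have hcB : B.cell α = closedBall v ρτ := by
            unfold St.cell
            rw [hBctr, hBrad]
            simp only [hctrB, hradB]
            rw [if_neg h1, if_neg h1, if_pos h2, if_pos h2]
          rw [hcB, A.cell_congr h2]
          unfold St.cell
          intro x hx
          rw [mem_closedBall] at hx ⊢
          have h3 : ρτ ≤ A.rad τ - dist v (A.ctr τ) := min_le_right _ _
          calc dist x (A.ctr τ) ≤ dist x v + dist v (A.ctr τ) := dist_triangle _ _ _
          _ ≤ A.rad τ := by linarith
        · have hcB : B.cell α = A.cell α := by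
            unfold St.cell
            rw [hBctr, hBrad]
            simp only [hctrB, hradB]
            rw [if_neg h1, if_neg h1, if_neg h2, if_neg h2]
          rw [hcB]
  refine ⟨B, hExt, by rw [hBqlen]; omega, ?_, ?_⟩
  · -- CloseProp
    refine ⟨N + L1, le_trans hML1 (Nat.le_add_left L1 N), by rw [hBqlen]; omega, ?_⟩
    intro x hx y hy
    rw [hcellσ, mem_closedBall] at hx
    rw [hcellτ, mem_closedBall] at hy
    have hxu : dist x u ≤ ρu := le_trans hx (min_le_left _ _)
    have hyv : dist y v ≤ ρv := le_trans hy (min_le_left _ _)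
    have hterm : ∀ i ∈ Finset.Ico N (N + L1),
        (if dist (orb f (B.qf i) x) (orb f (B.qf i) y) < 1 / (M : ℝ) then (1:ℝ) else 0) = 1 := by
      intro i hi
      rw [Finset.mem_Ico] at hi
      rw [hBqf, hq2 i hi.1 hi.2]
      set t := c (i - N) with ht
      have htT : t ≤ T := le_of_lt (hcd (i - N) L2 (by omega))
      have h1 : dist (orb f t x) (orb f t u) < η := hρu' x hxu t htT
      have h2 : dist (orb f t y) (orb f t v) < η := hρv' y hyv t htT
      have h2' : dist (orb f t v) (orb f t y) < η := by rwa [dist_comm] at h2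
      have h3 : dist (orb f t u) (orb f t v) < 1 / (2 * (M:ℝ)) := (hc (i - N)).2
      have h4 := dist_triangle4 (orb f t x) (orb f t u) (orb f t v) (orb f t y)
      have hη1 : η ≤ 1 / (4 * (M:ℝ)) := min_le_left _ _
      have hquarter : 1 / (4 * (M:ℝ)) + 1 / (2 * M) + 1 / (4 * M) = 1 / M := by
        field_simp
        ring
      rw [if_pos (by linarith)]
    have hIco : ∑ i ∈ Finset.Ico N (N + L1),
        (if dist (orb f (B.qf i) x) (orb f (B.qf i) y) < 1 / (M : ℝ) then (1:ℝ) else 0)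
        = L1 := by
      rw [Finset.sum_congr rfl hterm, Finset.sum_const, Nat.card_Ico, nsmul_eq_mul, mul_one,
        Nat.add_sub_cancel_left]
    have hge : (L1 : ℝ) ≤ indSum f B.qf x y (1 / (M : ℝ)) (N + L1) := by
      rw [← hIco]
      unfold indSum
      rw [Finset.range_eq_Ico]
      refine Finset.sum_le_sum_of_subset_of_nonneg ?_ ?_
      · intro i hi
        rw [Finset.mem_Ico] at hi ⊢
        omega
      · intro i _ _
        split <;> norm_num
    have hcastL1 : (L1 : ℝ) = M * ((N : ℝ) + 1) := by rw [hL1]; push_cast; ring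
    have harith : (1 - 1 / (M : ℝ)) * ((N : ℕ) + (L1 : ℕ) : ℕ) ≤ (L1 : ℝ) := by
      push_cast
      have hdiv : (N : ℝ) ≤ ((N : ℝ) + L1) / M := by
        rw [le_div_iff₀ hM0]
        nlinarith [hcastL1, Nat.cast_nonneg (α := ℝ) N]
      have hexp : (1 - 1 / (M : ℝ)) * ((N : ℝ) + L1) = ((N:ℝ) + L1) - ((N:ℝ) + L1) / M := by
        field_simp
      rw [hexp]
      linarith
    exact le_trans harith hge
  · -- FarProp
    refine ⟨N + L1 + L2,
      le_trans (le_trans hML1 (Nat.le_add_left L1 N)) (Nat.le_add_right (N + L1) L2),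
      le_of_eq hBqlen.symm, ?_⟩
    intro x hx y hy
    rw [hcellσ, mem_closedBall] at hx
    rw [hcellτ, mem_closedBall] at hy
    have hxu : dist x u ≤ ρu := le_trans hx (min_le_left _ _)
    have hyv : dist y v ≤ ρv := le_trans hy (min_le_left _ _)
    have hterm0 : ∀ i ∈ Finset.Ico (N + L1) (N + L1 + L2),
        (if dist (orb f (B.qf i) x) (orb f (B.qf i) y) < δ / 2 then (1:ℝ) else 0) = 0 := by
      intro i hi
      rw [Finset.mem_Ico] at hi
      rw [hBqf, hq3 i hi.1 hi.2]
      set t := d (i - (N + L1)) with ht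
      have htT : t ≤ T := hdT _ (by omega)
      have h1 : dist (orb f t x) (orb f t u) < η := hρu' x hxu t htT
      have h1' : dist (orb f t u) (orb f t x) < η := by rwa [dist_comm] at h1
      have h2 : dist (orb f t y) (orb f t v) < η := hρv' y hyv t htT
      have h3 : δ < dist (orb f t u) (orb f t v) := (hd (i - (N + L1))).2
      have h4 := dist_triangle4 (orb f t u) (orb f t x) (orb f t y) (orb f t v)
      have hη2 : η ≤ δ / 4 := min_le_right _ _
      rw [if_neg (by push_neg; linarith)]
    have hsplit : indSum f B.qf x y (δ / 2) (N + L1 + L2) =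
        (∑ i ∈ Finset.Ico 0 (N + L1),
          (if dist (orb f (B.qf i) x) (orb f (B.qf i) y) < δ / 2 then (1:ℝ) else 0)) +
        ∑ i ∈ Finset.Ico (N + L1) (N + L1 + L2),
          (if dist (orb f (B.qf i) x) (orb f (B.qf i) y) < δ / 2 then (1:ℝ) else 0) := by
      unfold indSum
      rw [Finset.range_eq_Ico, ← Finset.sum_Ico_consecutive
        (fun i => if dist (orb f (B.qf i) x) (orb f (B.qf i) y) < δ / 2 then (1:ℝ) else 0)
        (Nat.zero_le (N + L1)) (Nat.le_add_right (N + L1) L2)]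
    have hfirst : (∑ i ∈ Finset.Ico 0 (N + L1),
        (if dist (orb f (B.qf i) x) (orb f (B.qf i) y) < δ / 2 then (1:ℝ) else 0))
        ≤ ((N : ℝ) + L1) := by
      calc (∑ i ∈ Finset.Ico 0 (N + L1),
          (if dist (orb f (B.qf i) x) (orb f (B.qf i) y) < δ / 2 then (1:ℝ) else 0))
          ≤ ∑ i ∈ Finset.Ico 0 (N + L1), (1 : ℝ) :=
            Finset.sum_le_sum fun i _ => by split <;> norm_num
      _ = ((N : ℝ) + L1) := by
            rw [Finset.sum_const, Nat.card_Ico, nsmul_eq_mul, mul_one, Nat.sub_zero]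
            push_cast
            ring
    have hcastL2 : (L2 : ℝ) = M * ((N : ℝ) + L1 + 1) := by rw [hL2]; push_cast; ring
    calc indSum f B.qf x y (δ / 2) (N + L1 + L2)
        ≤ ((N : ℝ) + L1) + 0 := by
          rw [hsplit, Finset.sum_eq_zero hterm0]
          linarith [hfirst]
    _ ≤ ((N + L1 + L2 : ℕ) : ℝ) / M := by
          rw [le_div_iff₀ hM0]
          push_cast
          nlinarith [hcastL2, Nat.cast_nonneg (α := ℝ) N, Nat.cast_nonneg (α := ℝ) L1]

end Atomic2

section Fold
variable {X : Type*} [MetricSpace X] [CompactSpace X]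
variable {f : ℕ → X → X} {S : Set X} {δ : ℝ}

lemma CloseProp.congr {M : ℕ} {B : St X S M} {σ τ σ' τ' : ℕ → Bool}
    (h : CloseProp f B σ' τ') (h1 : EqUpTo M σ σ') (h2 : EqUpTo M τ τ') :
    CloseProp f B σ τ := by
  obtain ⟨n, a, b, c⟩ := h
  exact ⟨n, a, b, fun x hx y hy => c x (B.cell_congr h1 ▸ hx) y (B.cell_congr h2 ▸ hy)⟩

lemma FarProp.congr {M : ℕ} {B : St X S M} {σ τ σ' τ' : ℕ → Bool}
    (h : FarProp f δ B σ' τ') (h1 : EqUpTo M σ σ') (h2 : EqUpTo M τ τ') :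
    FarProp f δ B σ τ := by
  obtain ⟨n, a, b, c⟩ := h
  exact ⟨n, a, b, fun x hx y hy => c x (B.cell_congr h1 ▸ hx) y (B.cell_congr h2 ▸ hy)⟩

lemma fold (hf : ∀ n, Continuous (f n)) (hδ : 0 < δ)
    (hLY : ∀ x ∈ S, ∀ y ∈ S, x ≠ y →
      liminf (fun n => dist (orb f n x) (orb f n y)) atTop = 0 ∧
      δ < limsup (fun n => dist (orb f n x) (orb f n y)) atTop)
    {M : ℕ} (hM : 0 < M) (ps : List ((ℕ → Bool) × (ℕ → Bool)))
    (hps : ∀ p ∈ ps, ¬ EqUpTo M p.1 p.2) (A : St X S M) :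
    ∃ B : St X S M, Extends A B ∧ A.qlen + ps.length ≤ B.qlen ∧
      ∀ p ∈ ps, CloseProp f B p.1 p.2 ∧ FarProp f δ B p.1 p.2 := by
  induction ps generalizing A with
  | nil => exact ⟨A, Extends.rfl A, by simp, by simp⟩
  | cons hd tl ih =>
    obtain ⟨B₁, hE1, hlen1, hclose1, hfar1⟩ :=
      atomic hf hδ hLY hM A hd.1 hd.2 (hps hd List.mem_cons_self)
    obtain ⟨B, hE, hlen, hprops⟩ := ih (fun p hp => hps p (List.mem_cons_of_mem _ hp)) B₁
    refine ⟨B, hE1.trans hE, ?_, ?_⟩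
    · simp only [List.length_cons]
      omega
    · intro p hp
      rcases List.mem_cons.mp hp with h | h
      · subst h
        exact ⟨hclose1.persist hE, hfar1.persist hE⟩
      · exact hprops p h

/-- extension of a finite binary string to an infinite one -/
def extFn (M : ℕ) (s : Fin M → Bool) : ℕ → Bool := fun i => if h : i < M then s ⟨i, h⟩ else false

lemma eqUpTo_extFn {M : ℕ} (σ : ℕ → Bool) : EqUpTo M σ (extFn M (fun i => σ i.1)) := by
  intro i hi
  simp [extFn, hi]

lemma trans_exists (hf : ∀ n, Continuous (f n)) (hδ : 0 < δ)
    (hLY : ∀ x ∈ S, ∀ y ∈ S, x ≠ y →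
      liminf (fun n => dist (orb f n x) (orb f n y)) atTop = 0 ∧
      δ < limsup (fun n => dist (orb f n x) (orb f n y)) atTop)
    {M : ℕ} (A : St X S M) :
    ∃ B : St X S (M + 1), Extends A B ∧ A.qlen + 1 ≤ B.qlen ∧
      ∀ σ τ, ¬ EqUpTo (M + 1) σ τ → CloseProp f B σ τ ∧ FarProp f δ B σ τ := by
  classical
  let A' : St X S (M + 1) :=
    { ctr := A.ctr, rad := A.rad, big := A.big, qf := A.qf, qlen := A.qlen, qbd := A.qbd
      ctr_inv := fun α β h => A.ctr_inv α β (h.mono (Nat.le_succ M))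
      rad_inv := fun α β h => A.rad_inv α β (h.mono (Nat.le_succ M))
      big_inv := fun α β h => A.big_inv α β (h.mono (Nat.le_succ M))
      rad_pos := A.rad_pos, big_S := A.big_S, big_unc := A.big_unc, big_ball := A.big_ball
      q_mono := A.q_mono, q_bd := A.q_bd }
  set ps : List ((ℕ → Bool) × (ℕ → Bool)) :=
    ((Finset.univ : Finset ((Fin (M + 1) → Bool) × (Fin (M + 1) → Bool))).filter
      (fun p => p.1 ≠ p.2)).toList.map
      (fun p => (extFn (M + 1) p.1, extFn (M + 1) p.2)) with hps_def
  have hmem_ps : ∀ (s t : Fin (M + 1) → Bool), s ≠ t →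
      (extFn (M + 1) s, extFn (M + 1) t) ∈ ps := by
    intro s t hst
    rw [hps_def, List.mem_map]
    refine ⟨(s, t), ?_, rfl⟩
    rw [Finset.mem_toList, Finset.mem_filter]
    exact ⟨Finset.mem_univ _, hst⟩
  have hps : ∀ p ∈ ps, ¬ EqUpTo (M + 1) p.1 p.2 := by
    intro p hp
    rw [hps_def, List.mem_map] at hp
    obtain ⟨q, hq, rfl⟩ := hp
    rw [Finset.mem_toList, Finset.mem_filter] at hq
    intro hEq
    refine hq.2 ?_
    funext i
    have h1 := hEq i.1 i.2
    simpa [extFn, i.2] using h1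
  obtain ⟨B, hE, hlen, hprops⟩ := fold hf hδ hLY (Nat.succ_pos M) ps hps A'
  have hEA : Extends A B := by
    refine Extends.trans (B := A') ⟨le_rfl, fun _ _ => rfl, fun α => ?_⟩ hE
    exact subset_rfl
  have hne : ps ≠ [] := by
    refine List.ne_nil_of_mem (hmem_ps (fun _ => false) (fun _ => true) ?_)
    intro h
    have := congrFun h ⟨0, Nat.succ_pos M⟩
    simp at this
  have hlen' : A.qlen + 1 ≤ B.qlen := by
    have h1 : 1 ≤ ps.length := List.length_pos_iff.mpr hne
    have h2 : A'.qlen = A.qlen := rfl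
    omega
  refine ⟨B, hEA, hlen', ?_⟩
  intro σ τ hστ
  have hst : (fun i : Fin (M + 1) => σ i.1) ≠ (fun i : Fin (M + 1) => τ i.1) := by
    intro h
    exact hστ (fun i hi => congrFun h ⟨i, hi⟩)
  obtain ⟨hcl, hfr⟩ := hprops _ (hmem_ps _ _ hst)
  exact ⟨hcl.congr (eqUpTo_extFn σ) (eqUpTo_extFn τ),
    hfr.congr (eqUpTo_extFn σ) (eqUpTo_extFn τ)⟩

end Fold

theorem stmt7 {X : Type*} [MetricSpace X] [CompactSpace X]
    (f : ℕ → X → X) (hf : ∀ n, Continuous (f n))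
    (δ : ℝ) (hδ : 0 < δ) (S : Set X) (hS : ¬ S.Countable)
    (hLY : ∀ x ∈ S, ∀ y ∈ S, x ≠ y →
      liminf (fun n => dist (orb f n x) (orb f n y)) atTop = 0 ∧
      δ < limsup (fun n => dist (orb f n x) (orb f n y)) atTop) :
    ∃ δ' > 0, ∃ q : ℕ → ℕ, StrictMono q ∧ ∃ D : Set X, ¬ D.Countable ∧
      ∀ x ∈ D, ∀ y ∈ D, x ≠ y →
        (∀ ε > 0, limsup (distAvg f q x y ε) atTop = 1) ∧
        liminf (distAvg f q x y δ') atTop = 0 := by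
  classical
  have hδ2 : 0 < δ / 2 := by linarith
  have hSne : S.Nonempty := by
    rcases S.eq_empty_or_nonempty with h | h
    · exact absurd (by simp [h]) hS
    · exact h
  obtain ⟨x₀, hx₀⟩ := hSne
  obtain ⟨C, hC⟩ := exists_dist_bound X
  have hC0 : 0 ≤ C := le_trans dist_nonneg (hC x₀ x₀)
  have init : St X S 0 :=
    { ctr := fun _ => x₀, rad := fun _ => C + 1, big := fun _ => S,
      qf := fun i => i, qlen := 0, qbd := 0,
      ctr_inv := fun _ _ _ => rfl, rad_inv := fun _ _ _ => rfl, big_inv := fun _ _ _ => rfl,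
      rad_pos := fun _ => by
        show (0:ℝ) < C + 1
        linarith,
      big_S := fun _ => subset_rfl,
      big_unc := fun _ => hS,
      big_ball := fun _ => fun z hz => by
        show z ∈ ball x₀ (C + 1)
        rw [mem_ball]
        exact lt_of_le_of_lt (hC z x₀) (by linarith),
      q_mono := fun i j _ hj => absurd hj (Nat.not_lt_zero j),
      q_bd := fun i hi => absurd hi (Nat.not_lt_zero i) }
  choose F hF using fun (M : ℕ) (A : St X S M) => trans_exists hf hδ hLY A
  set g : (M : ℕ) → St X S M := fun M => Nat.rec init (fun M A => F M A) M with hg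
  have hstep : ∀ M, Extends (g M) (g (M + 1)) ∧ (g M).qlen + 1 ≤ (g (M + 1)).qlen ∧
      ∀ σ τ, ¬ EqUpTo (M + 1) σ τ →
        CloseProp f (g (M + 1)) σ τ ∧ FarProp f δ (g (M + 1)) σ τ :=
    fun M => hF M (g M)
  have hql : ∀ M, M ≤ (g M).qlen := by
    intro M
    induction M with
    | zero => exact Nat.zero_le _
    | succ M ih =>
      have := (hstep M).2.1
      omega
  have hqext : ∀ M M', M ≤ M' → Extends (g M) (g M') := by
    intro M M' h
    refine Nat.le_induction (Extends.rfl _) (fun n hn ih => ih.trans (hstep n).1) M' h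
  set Q : ℕ → ℕ := fun i => (g (i + 1)).qf i with hQdef
  have hQeq : ∀ m i, i < (g m).qlen → Q i = (g m).qf i := by
    intro m i hi
    have hi1 : i < (g (i + 1)).qlen := lt_of_lt_of_le (Nat.lt_succ_self i) (hql (i + 1))
    rcases le_total m (i + 1) with h | h
    · exact (hqext m (i + 1) h).2.1 i hi
    · exact ((hqext (i + 1) m h).2.1 i hi1).symm
  have hQmono : StrictMono Q := by
    intro i j hij
    have hj : j < (g (j + 1)).qlen := lt_of_lt_of_le (Nat.lt_succ_self j) (hql (j + 1))
    have hi : i < (g (j + 1)).qlen := lt_trans hij hj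
    have e1 : Q i = (g (j + 1)).qf i := hQeq (j + 1) i hi
    have e2 : Q j = (g (j + 1)).qf j := hQeq (j + 1) j hj
    rw [e1, e2]
    exact (g (j + 1)).q_mono i j hij hj
  have hcellchain : ∀ (α : ℕ → Bool) (m : ℕ), (g (m + 1)).cell α ⊆ (g m).cell α :=
    fun α m => (hstep m).1.2.2 α
  have hφex : ∀ α : ℕ → Bool, ∃ x, ∀ m, x ∈ (g m).cell α := by
    intro α
    have h := IsCompact.nonempty_iInter_of_sequence_nonempty_isCompact_isClosed
      (fun m => (g m).cell α) (hcellchain α) (fun m => (g m).cell_nonempty α)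
      (isClosed_closedBall.isCompact) (fun m => isClosed_closedBall)
    obtain ⟨x, hx⟩ := h
    rw [mem_iInter] at hx
    exact ⟨x, hx⟩
  choose φ hφ using hφex
  have hinj : Function.Injective φ := by
    intro α β hαβeq
    by_contra hne
    obtain ⟨i, hi⟩ := Function.ne_iff.mp hne
    have hnEq : ¬ EqUpTo (i + 2) α β := fun h => hi (h i (by omega))
    obtain ⟨-, n, hn1, hn2, hn3⟩ := (hstep (i + 1)).2.2 α β hnEq
    have h3 := hn3 (φ α) (hφ α (i + 2)) (φ β) (hφ β (i + 2))
    have hsum : indSum f (g (i + 2)).qf (φ α) (φ β) (δ / 2) n = n := by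
      unfold indSum
      rw [Finset.sum_congr rfl (fun j _ => if_pos (by rw [hαβeq]; simpa using hδ2))]
      simp
    rw [hsum] at h3
    have hpos : (0 : ℝ) < ((i + 2 : ℕ) : ℝ) := by positivity
    rw [le_div_iff₀ hpos] at h3
    have h4 : (2 : ℝ) ≤ ((i + 2 : ℕ) : ℝ) := by exact_mod_cast (by omega : 2 ≤ i + 2)
    have h5 : (1 : ℝ) ≤ (n : ℝ) := by exact_mod_cast (by omega : 1 ≤ n)
    nlinarith
  set D := Set.range φ with hD
  have hDunc : ¬ D.Countable := by
    intro h
    have h2 : (φ ⁻¹' D).Countable := h.preimage hinj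
    rw [hD, Set.preimage_range, Set.countable_univ_iff] at h2
    exact not_countable_funBool h2
  refine ⟨δ / 2, hδ2, Q, hQmono, D, hDunc, ?_⟩
  rintro x ⟨α, rfl⟩ y ⟨β, rfl⟩ hxy
  have hne : α ≠ β := fun h => hxy (by rw [h])
  obtain ⟨i₀, hi₀⟩ := Function.ne_iff.mp hne
  have hBU : ∀ ε : ℝ, IsBoundedUnder (· ≤ ·) atTop (distAvg f Q (φ α) (φ β) ε) :=
    fun ε => isBoundedUnder_of ⟨1, fun n => distAvg_le_one f Q (φ α) (φ β) ε n⟩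
  have hBL : ∀ ε : ℝ, IsBoundedUnder (· ≥ ·) atTop (distAvg f Q (φ α) (φ β) ε) :=
    fun ε => isBoundedUnder_of ⟨0, fun n => distAvg_nonneg f Q (φ α) (φ β) ε n⟩
  have hnEqAll : ∀ m, i₀ ≤ m → ¬ EqUpTo (m + 1) α β := fun m hm h => hi₀ (h i₀ (by omega))
  constructor
  · intro ε hε
    have hfreq : ∀ m : ℕ, 1 / ((m : ℝ) + 1) ≤ ε → i₀ ≤ m →
        ∃ n, m + 1 ≤ n ∧ 1 - 1 / ((m : ℝ) + 1) ≤ distAvg f Q (φ α) (φ β) ε n := by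
      intro m hme him
      obtain ⟨⟨n, hn1, hn2, hn3⟩, -⟩ := (hstep m).2.2 α β (hnEqAll m him)
      have h3 := hn3 (φ α) (hφ α (m + 1)) (φ β) (hφ β (m + 1))
      have hq : ∀ i, i < n → Q i = (g (m + 1)).qf i :=
        fun i hi => hQeq (m + 1) i (lt_of_lt_of_le hi hn2)
      rw [← indSum_congr hq] at h3
      have hnpos : 0 < n := by omega
      have hcast : ((m + 1 : ℕ) : ℝ) = (m : ℝ) + 1 := by push_cast; ring
      have hmε : indSum f Q (φ α) (φ β) (1 / ((m + 1 : ℕ) : ℝ)) n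
          ≤ indSum f Q (φ α) (φ β) ε n :=
        indSum_mono_eps (by rw [hcast]; exact hme) n
      refine ⟨n, hn1, ?_⟩
      rw [distAvg_eq_indSum, le_div_iff₀ (by exact_mod_cast hnpos)]
      calc (1 - 1 / ((m : ℝ) + 1)) * n = (1 - 1 / ((m + 1 : ℕ) : ℝ)) * n := by
            rw [hcast]
      _ ≤ indSum f Q (φ α) (φ β) (1 / ((m + 1 : ℕ) : ℝ)) n := h3
      _ ≤ indSum f Q (φ α) (φ β) ε n := hmε
    refine le_antisymm ?_ ?_
    · exact limsup_le_of_le (hBL ε).isCoboundedUnder_le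
        (Eventually.of_forall (fun n => distAvg_le_one f Q (φ α) (φ β) ε n))
    · have hliml : ∀ b : ℝ, b < 1 → b ≤ limsup (distAvg f Q (φ α) (φ β) ε) atTop := by
        intro b hb
        refine le_limsup_of_frequently_le ?_ (hBU ε)
        rw [frequently_atTop]
        intro K
        obtain ⟨m1, hm1⟩ := exists_nat_ge (1 / ε)
        obtain ⟨m2, hm2⟩ := exists_nat_ge (1 / (1 - b))
        set m := max (max m1 m2) (max i₀ K) with hm
        have him : i₀ ≤ m := le_trans (le_max_left _ _) (le_max_right _ _)
        have hKm : K ≤ m := le_trans (le_max_right _ _) (le_max_right _ _)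
        have hm1m : (m1 : ℝ) ≤ m := by
          exact_mod_cast le_trans (le_max_left _ _) (le_max_left _ _)
        have hm2m : (m2 : ℝ) ≤ m := by
          exact_mod_cast le_trans (le_max_right _ _) (le_max_left _ _)
        have hεm : 1 / ((m : ℝ) + 1) ≤ ε := by
          rw [div_le_iff₀ (by positivity)]
          have h1 : 1 / ε ≤ (m : ℝ) + 1 := by linarith
          rw [div_le_iff₀ hε] at h1
          linarith
        have hbm : 1 / ((m : ℝ) + 1) ≤ 1 - b := by
          rw [div_le_iff₀ (by positivity)]
          have h1 : 1 / (1 - b) ≤ (m : ℝ) + 1 := by linarith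
          rw [div_le_iff₀ (by linarith)] at h1
          linarith
        obtain ⟨n, hn1, hn2⟩ := hfreq m hεm him
        exact ⟨n, by omega, le_trans (by linarith) hn2⟩
      by_contra hcon
      push_neg at hcon
      have := hliml ((limsup (distAvg f Q (φ α) (φ β) ε) atTop + 1) / 2) (by linarith)
      linarith
  · have hfreq2 : ∀ m : ℕ, i₀ ≤ m →
        ∃ n, m + 1 ≤ n ∧ distAvg f Q (φ α) (φ β) (δ / 2) n ≤ 1 / ((m : ℝ) + 1) := by
      intro m him
      obtain ⟨-, n, hn1, hn2, hn3⟩ := (hstep m).2.2 α β (hnEqAll m him)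
      have h3 := hn3 (φ α) (hφ α (m + 1)) (φ β) (hφ β (m + 1))
      have hq : ∀ i, i < n → Q i = (g (m + 1)).qf i :=
        fun i hi => hQeq (m + 1) i (lt_of_lt_of_le hi hn2)
      rw [← indSum_congr hq] at h3
      have hnpos : 0 < n := by omega
      have hcast : ((m + 1 : ℕ) : ℝ) = (m : ℝ) + 1 := by push_cast; ring
      refine ⟨n, hn1, ?_⟩
      rw [distAvg_eq_indSum, div_le_iff₀ (by exact_mod_cast hnpos : (0:ℝ) < n)]
      calc indSum f Q (φ α) (φ β) (δ / 2) n ≤ (n : ℝ) / ((m + 1 : ℕ) : ℝ) := h3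
      _ = 1 / ((m : ℝ) + 1) * n := by rw [hcast]; ring
    refine le_antisymm ?_ ?_
    · have hlim2 : ∀ b : ℝ, 0 < b →
          liminf (distAvg f Q (φ α) (φ β) (δ / 2)) atTop ≤ b := by
        intro b hb
        refine liminf_le_of_frequently_le ?_ (hBL (δ / 2))
        rw [frequently_atTop]
        intro K
        obtain ⟨m1, hm1⟩ := exists_nat_ge (1 / b)
        set m := max m1 (max i₀ K) with hm
        have him : i₀ ≤ m := le_trans (le_max_left _ _) (le_max_right _ _)
        have hKm : K ≤ m := le_trans (le_max_right _ _) (le_max_right _ _)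
        have hm1m : (m1 : ℝ) ≤ m := by exact_mod_cast le_max_left _ _
        have hbm : 1 / ((m : ℝ) + 1) ≤ b := by
          rw [div_le_iff₀ (by positivity)]
          have h1 : 1 / b ≤ (m : ℝ) + 1 := by linarith
          rw [div_le_iff₀ hb] at h1
          linarith
        obtain ⟨n, hn1, hn2⟩ := hfreq2 m him
        exact ⟨n, by omega, le_trans hn2 hbm⟩
      by_contra hcon
      push_neg at hcon
      have := hlim2 (liminf (distAvg f Q (φ α) (φ β) (δ / 2)) atTop / 2) (by linarith)
      linarith
    · exact le_liminf_of_le (hBU (δ / 2)).isCoboundedUnder_ge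
        (Eventually.of_forall (fun n => distAvg_nonneg f Q (φ α) (φ β) (δ / 2) n))
end

section
/- Let (X,d) be a complete separable metric space and f_n: X → X continuous for each n ≥ 0. If the non-autonomous system x_{n+1} = f_n(x_n) is topologically weakly mixing, then the set S = {(x,y) ∈ X × X : the orbit {(f_0^n(x), f_0^n(y))}_{n≥0} is dense in X × X} is a dense G_δ subset of X × X. -/
open Filter Metric Set
open scoped Classical

lemma orb_continuous {X : Type*} [MetricSpace X] (f : ℕ → X → X) (hf : ∀ n, Continuous (f n)) :
    ∀ n, Continuous (orb f n)
  | 0 => continuous_id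
  | n + 1 => (hf n).comp (orb_continuous f hf n)

theorem stmt9 {X : Type*} [MetricSpace X] [CompleteSpace X] [TopologicalSpace.SeparableSpace X]
    (f : ℕ → X → X) (hf : ∀ n, Continuous (f n))
    (hwm : ∀ U₁ V₁ U₂ V₂ : Set X, IsOpen U₁ → IsOpen V₁ → IsOpen U₂ → IsOpen V₂ →
      U₁.Nonempty → V₁.Nonempty → U₂.Nonempty → V₂.Nonempty →
      ∃ n > 0, (orb f n '' U₁ ∩ V₁).Nonempty ∧ (orb f n '' U₂ ∩ V₂).Nonempty) :
    Dense {p : X × X | Dense (Set.range (fun n => (orb f n p.1, orb f n p.2)))} ∧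
    IsGδ {p : X × X | Dense (Set.range (fun n => (orb f n p.1, orb f n p.2)))} := by

  set S := {p : X × X | Dense (Set.range (fun n => (orb f n p.1, orb f n p.2)))} with hS
  obtain ⟨B, hBc, hBne, hBb⟩ := TopologicalSpace.exists_countable_basis (X × X)
  have hcont : ∀ n, Continuous (fun p : X × X => (orb f n p.1, orb f n p.2)) := fun n =>
    ((orb_continuous f hf n).comp continuous_fst).prodMk
      ((orb_continuous f hf n).comp continuous_snd)
  have hSeq : S = ⋂ W ∈ B, ⋃ n, (fun p : X × X => (orb f n p.1, orb f n p.2)) ⁻¹' W := by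
    ext p
    simp only [hS, mem_setOf_eq, mem_iInter, mem_iUnion, mem_preimage]
    constructor
    · intro hd W hW
      obtain ⟨q, hq⟩ := (hd.inter_open_nonempty W (hBb.isOpen hW)
        (nonempty_iff_ne_empty.2 (fun h => hBne (h ▸ hW))))
      obtain ⟨n, hn⟩ := hq.2
      exact ⟨n, by simpa [hn] using hq.1⟩
    · intro h
      rw [hBb.dense_iff]
      intro W hW hWne
      obtain ⟨n, hn⟩ := h W hW
      exact ⟨_, hn, mem_range_self n⟩
  have hopen : ∀ W ∈ B, IsOpen (⋃ n, (fun p : X × X => (orb f n p.1, orb f n p.2)) ⁻¹' W) :=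
    fun W hW => isOpen_iUnion fun n => (hBb.isOpen hW).preimage (hcont n)
  have hdense : ∀ W ∈ B, Dense (⋃ n, (fun p : X × X => (orb f n p.1, orb f n p.2)) ⁻¹' W) := by
    intro W hW
    rw [dense_iff_inter_open]
    intro U hU hUne
    obtain ⟨⟨q₁, q₂⟩, hq⟩ := hUne
    obtain ⟨u, v, hu, hv, hq₁, hq₂, huv⟩ := isOpen_prod_iff.1 hU q₁ q₂ hq
    have hWne : W.Nonempty := nonempty_iff_ne_empty.2 (fun h => hBne (h ▸ hW))
    obtain ⟨⟨w₁, w₂⟩, hw⟩ := hWne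
    obtain ⟨v₁, v₂, hv₁, hv₂, hw₁, hw₂, hvw⟩ := isOpen_prod_iff.1 (hBb.isOpen hW) w₁ w₂ hw
    obtain ⟨n, -, ⟨a', ⟨a, ha, rfl⟩, ha'⟩, ⟨b', ⟨b, hb, rfl⟩, hb'⟩⟩ :=
      hwm u v₁ v v₂ hu hv₁ hv hv₂ ⟨q₁, hq₁⟩ ⟨w₁, hw₁⟩ ⟨q₂, hq₂⟩ ⟨w₂, hw₂⟩
    refine ⟨(a, b), huv ⟨ha, hb⟩, mem_iUnion.2 ⟨n, ?_⟩⟩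
    exact hvw ⟨ha', hb'⟩
  constructor
  · rw [hSeq]
    exact dense_biInter_of_isOpen hopen hBc hdense
  · rw [hSeq]
    exact .biInter hBc fun W hW => (hopen W hW).isGδ
end
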